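/- If a bipartite graph with parts agents and institutions has no safe block among a set D̄ of institutions each having at least one neighbor, then the graph restricted to D̄ admits a matching saturating all institutions of D̄ (every institution in D̄ is matched). -/

import Mathlib

open scoped Classical

variable {N D : Type*} [Fintype N] [Fintype D] [DecidableEq N] [DecidableEq D]

/-- Neighborhood of a set of institutions: agents adjacent to some institution in `T`. -/
noncomputable def nbr (adj : D → N → Prop) (T : Finset D) : Finset N :=
  Finset.univ.filter fun a => ∃ d ∈ T, adj d a

/-- `T` is equal-acceptable: exactly as many neighbors as institutions. -/
def equalAcc (adj : D → N → Prop) (T : Finset D) : Prop :=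
  (nbr adj T).card = T.card

/-- A safe block: a nonempty equal-acceptable set with no nonempty proper
equal-acceptable subset. -/
def safeBlock (adj : D → N → Prop) (S : Finset D) : Prop :=
  S.Nonempty ∧ equalAcc adj S ∧ ∀ S' ⊂ S, S'.Nonempty → ¬ equalAcc adj S'

/-- `M` is a matching of the bipartite graph restricted to institutions `Dbar`. -/
def isMatching (adj : D → N → Prop) (Dbar : Finset D) (M : Finset (D × N)) : Prop :=
  (∀ p ∈ M, p.1 ∈ Dbar ∧ adj p.1 p.2) ∧
  (∀ p ∈ M, ∀ q ∈ M, p.1 = q.1 → p = q) ∧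
  (∀ p ∈ M, ∀ q ∈ M, p.2 = q.2 → p = q)

/-! A set violating Hall's condition would contain a safe block. Indeed, an equal-acceptable set
that is not a safe block has a smaller nonempty equal-acceptable subset, and removing one
institution from an under-acceptable set leaves a set with at most as many neighbors as members,
which is nonempty because a single institution has a neighbor. Hall's marriage theorem then gives
the matching. -/

omit [Fintype D] [DecidableEq N] [DecidableEq D] in
@[simp]
lemma mem_nbr {adj : D → N → Prop} {T : Finset D} {a : N} :
    a ∈ nbr adj T ↔ ∃ d ∈ T, adj d a := by
  simp [nbr]

omit [Fintype D] [DecidableEq N] [DecidableEq D] in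
lemma nbr_mono (adj : D → N → Prop) {T T' : Finset D} (h : T ⊆ T') :
    nbr adj T ⊆ nbr adj T' := fun a ha => by
  obtain ⟨d, hd, hda⟩ := mem_nbr.mp ha
  exact mem_nbr.mpr ⟨d, h hd, hda⟩

omit [Fintype D] [DecidableEq N] in
lemma exists_safeBlock_subset (adj : D → N → Prop) {T : Finset D} (hT : T.Nonempty)
    (hnb : ∀ d ∈ T, ∃ a, adj d a) (hle : (nbr adj T).card ≤ T.card) :
    ∃ S ⊆ T, safeBlock adj S := by
  induction T using Finset.strongInduction with
  | H T ih =>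
  rcases hle.lt_or_eq with hlt | heq
  · obtain ⟨d, hd⟩ := hT
    have hT' : (T.erase d).Nonempty := by
      rw [Finset.nonempty_iff_ne_empty]
      intro hempty
      obtain ⟨a, ha⟩ := hnb d hd
      have hcard : T.card = 1 := by rw [← Finset.card_erase_add_one hd, hempty, Finset.card_empty]
      have : 0 < (nbr adj T).card := Finset.card_pos.mpr ⟨a, mem_nbr.mpr ⟨d, hd, ha⟩⟩
      omega
    have hle' : (nbr adj (T.erase d)).card ≤ (T.erase d).card := by
      have := Finset.card_le_card (nbr_mono adj (T.erase_subset d))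
      rw [Finset.card_erase_of_mem hd]
      omega
    obtain ⟨S, hS, hSblock⟩ := ih _ (Finset.erase_ssubset hd) hT'
      (fun e he => hnb e (Finset.mem_of_mem_erase he)) hle'
    exact ⟨S, hS.trans (T.erase_subset d), hSblock⟩
  · by_cases hblock : safeBlock adj T
    · exact ⟨T, subset_rfl, hblock⟩
    · obtain ⟨S', hS'T, hS'ne, hS'eq⟩ : ∃ S' ⊂ T, S'.Nonempty ∧ equalAcc adj S' := by
        simpa [safeBlock, hT, equalAcc, heq] using hblock
      obtain ⟨S, hS, hSblock⟩ := ih S' hS'T hS'ne (fun e he => hnb e (hS'T.subset he)) hS'eq.le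
      exact ⟨S, hS.trans hS'T.subset, hSblock⟩

omit [Fintype D] [DecidableEq N] in
lemma card_le_card_nbr_of_forall_not_safeBlock (adj : D → N → Prop) {Dbar : Finset D}
    (hns : ∀ S ⊆ Dbar, ¬ safeBlock adj S) (hnb : ∀ d ∈ Dbar, ∃ a, adj d a)
    {T : Finset D} (hT : T ⊆ Dbar) : T.card ≤ (nbr adj T).card := by
  by_contra! hlt
  have hTne : T.Nonempty := Finset.card_pos.mp (by omega)
  obtain ⟨S, hST, hS⟩ := exists_safeBlock_subset adj hTne (fun d hd => hnb d (hT hd)) hlt.le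
  exact hns S (hST.trans hT) hS

omit [Fintype N] [Fintype D] in
lemma isMatching_image_of_injective (adj : D → N → Prop) (Dbar : Finset D) (f : Dbar → N)
    (hf : Function.Injective f) (hadj : ∀ d, adj d.1 (f d)) :
    isMatching adj Dbar (Dbar.attach.image fun d => (d.1, f d)) := by
  refine ⟨?_, ?_, ?_⟩
  · simp only [Finset.mem_image, Finset.mem_attach, true_and]
    rintro _ ⟨d, rfl⟩
    exact ⟨d.2, hadj d⟩
  · simp only [Finset.mem_image, Finset.mem_attach, true_and]
    rintro _ ⟨d, rfl⟩ _ ⟨e, rfl⟩ h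
    rw [Subtype.ext h]
  · simp only [Finset.mem_image, Finset.mem_attach, true_and]
    rintro _ ⟨d, rfl⟩ _ ⟨e, rfl⟩ h
    rw [hf h]

/-- If there is no safe block among institutions  and every institution of 
has a neighbor, then there is a matching saturating all of . -/
theorem no_safe_block_saturating_matching (adj : D → N → Prop) (Dbar : Finset D)
    (hns : ∀ S ⊆ Dbar, ¬ safeBlock adj S)
    (hnb : ∀ d ∈ Dbar, ∃ a, adj d a) :
    ∃ M : Finset (D × N), isMatching adj Dbar M ∧ ∀ d ∈ Dbar, ∃ a, (d, a) ∈ M := by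
  have hall (A : Finset Dbar) : A.card ≤ (Finset.univ.filter fun a => ∃ d ∈ A, adj d a).card := by
    have hcard := card_le_card_nbr_of_forall_not_safeBlock adj hns hnb
      (T := A.map (Function.Embedding.subtype _)) fun x hx => by
        obtain ⟨y, -, rfl⟩ := Finset.mem_map.mp hx
        exact y.2
    rw [Finset.card_map] at hcard
    convert hcard using 2
    ext a
    simp
  obtain ⟨f, hf, hadj⟩ := (Fintype.all_card_le_filter_rel_iff_exists_injective _).mp hall
  refine ⟨_, isMatching_image_of_injective adj Dbar f hf hadj, fun d hd => ⟨f ⟨d, hd⟩, ?_⟩⟩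
  exact Finset.mem_image.mpr ⟨⟨d, hd⟩, Finset.mem_attach _ _, rfl⟩
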